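/- Relations on a potential wall (Lemma 4.2): fix a frame (H,γ,u), let ch = (x, y₁H + y₂γ + δ, z) and ch' = (r, c₁H + c₂γ + δ', χ') with xc₁ − ry₁ ≠ 0, and suppose (s,t) with t > 0 satisfies the wall equation (s − C)² + t² = D + C² and Im Z_{ω,β}(ch) ≠ 0, where ω = tH, β = sH + uγ and μ := −Re Z_{ω,β}(ch)/Im Z_{ω,β}(ch). Then (i) μ·ω + β = C·H + u·γ in V (equivalently μ·t + s = C), and (ii) B(β, μω + β) − (1/2)(B(ω,ω) + B(β,β)) = −(g/2)·D − (d/2)·u². -/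

import Mathlib

/-! In the frame, `Im Z = t g (y₁ - x s)`. The numbers `C`, `D` solve, by Cramer's rule, the linear
system `g (C y₁ + x D / 2) = z + u d y₂ - x u² d / 2` (and its analogue for `ch'`); combined with the
wall equation this gives `Re Z = (s - C) g (y₁ - x s)`, so `μ = (C - s) / t`. Relation (ii) is
then the wall equation scaled by `-g / 2`. -/

noncomputable section

variable {V : Type*} [AddCommGroup V] [Module ℝ V]

/-- The Mukai pairing on `ℝ × V × ℝ`. -/
def mukaiPair (B : V →ₗ[ℝ] V →ₗ[ℝ] ℝ) (K : V) (w v : ℝ × V × ℝ) : ℝ :=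
  B w.2.1 v.2.1 - w.1 * (v.2.2 - (1/2) * B v.2.1 K)
    - v.1 * (w.2.2 + (1/2) * B w.2.1 K) - (1/8) * w.1 * v.1 * B K K

/-- The Mukai vector of a Chern character. -/
def mukaiVec (B : V →ₗ[ℝ] V →ₗ[ℝ] ℝ) (K : V) (χ : ℝ) (ch : ℝ × V × ℝ) : ℝ × V × ℝ :=
  (ch.1, ch.2.1 - ((1/4 : ℝ) * ch.1) • K,
    ch.2.2 - (1/4) * B ch.2.1 K + (1/2) * ch.1 * (χ - (1/16) * B K K))

/-- Real part of the central charge `Z_{ω,β}(ch)`. -/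
def ZRe (B : V →ₗ[ℝ] V →ₗ[ℝ] ℝ) (ω β : V) (ch : ℝ × V × ℝ) : ℝ :=
  -ch.2.2 + B ch.2.1 β - (ch.1 / 2) * (B β β - B ω ω)

/-- Imaginary part of the central charge `Z_{ω,β}(ch)`. -/
def ZIm (B : V →ₗ[ℝ] V →ₗ[ℝ] ℝ) (ω β : V) (ch : ℝ × V × ℝ) : ℝ :=
  B ch.2.1 ω - ch.1 * B β ω

/-- Real part of the vector `℧_{Z_{ω,β}}`. -/
def mhoRe (B : V →ₗ[ℝ] V →ₗ[ℝ] ℝ) (K : V) (χ : ℝ) (ω β : V) : ℝ × V × ℝ :=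
  (1, β - (3/4 : ℝ) • K,
    -(1/2) * B ω ω + (1/2) * B (β - (3/4 : ℝ) • K) (β - (3/4 : ℝ) • K)
      - (1/2) * (χ - (1/8) * B K K))

/-- Imaginary part of the vector `℧_{Z_{ω,β}}`. -/
def mhoIm (B : V →ₗ[ℝ] V →ₗ[ℝ] ℝ) (K : V) (ω β : V) : ℝ × V × ℝ :=
  (0, ω, B (β - (3/4 : ℝ) • K) ω)

/-- The Bayer–Macrì vector `w_{ω,β}(ch)`. -/
def wBM (B : V →ₗ[ℝ] V →ₗ[ℝ] ℝ) (K : V) (χ : ℝ) (ω β : V) (ch : ℝ × V × ℝ) :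
    ℝ × V × ℝ :=
  ZIm B ω β ch • mhoRe B K χ ω β - ZRe B ω β ch • mhoIm B K ω β


section Frame

variable (B : V →ₗ[ℝ] V →ₗ[ℝ] ℝ) {H γ δ : V} {g d : ℝ}

theorem ZIm_frame (hg : B H H = g) (hγH : B γ H = 0) (hδH : B δ H = 0) (s t u x y₁ y₂ z : ℝ) :
    ZIm B (t • H) (s • H + u • γ) (x, y₁ • H + y₂ • γ + δ, z) = t * g * (y₁ - x * s) := by
  simp only [ZIm, map_add, map_smul, LinearMap.add_apply, LinearMap.smul_apply, smul_eq_mul,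
    hg, hγH, hδH]
  ring

theorem ZRe_frame (hg : B H H = g) (hd : B γ γ = -d) (hHγ : B H γ = 0) (hγH : B γ H = 0)
    (hδH : B δ H = 0) (hδγ : B δ γ = 0) (s t u x y₁ y₂ z : ℝ) :
    ZRe B (t • H) (s • H + u • γ) (x, y₁ • H + y₂ • γ + δ, z) =
      -z + g * s * y₁ - d * u * y₂ - x / 2 * (g * (s ^ 2 - t ^ 2) - d * u ^ 2) := by
  simp only [ZRe, map_add, map_smul, LinearMap.add_apply, LinearMap.smul_apply, smul_eq_mul,
    hg, hd, hHγ, hγH, hδH, hδγ]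
  ring

theorem frame_pair (hg : B H H = g) (hd : B γ γ = -d) (hHγ : B H γ = 0) (hγH : B γ H = 0)
    (a b a' b' : ℝ) : B (a • H + b • γ) (a' • H + b' • γ) = g * a * a' - d * b * b' := by
  simp only [map_add, map_smul, LinearMap.add_apply, LinearMap.smul_apply, smul_eq_mul,
    hg, hd, hHγ, hγH]
  ring

end Frame

section Wall

variable {g d u x y₁ y₂ z C D s t : ℝ}

theorem wall_parameters_linear_eq {r c₁ c₂ χ' : ℝ} (hg : g ≠ 0) (hden : x * c₁ - r * y₁ ≠ 0)
    (hC : C = (x * χ' - r * z + u * d * (x * c₂ - r * y₂)) / (g * (x * c₁ - r * y₁)))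
    (hD : D = (2*z*c₁ - 2*c₂*u*d*y₁ - x*u^2*d*c₁ + 2*y₂*u*d*c₁ - 2*χ'*y₁ + r*u^2*d*y₁)
              / (g * (x * c₁ - r * y₁))) :
    g * (C * y₁ + x * D / 2) = z + u * d * y₂ - x * u ^ 2 * d / 2 := by
  rw [hC, hD]
  field_simp
  ring

theorem ZRe_frame_eq_on_wall
    (hlin : g * (C * y₁ + x * D / 2) = z + u * d * y₂ - x * u ^ 2 * d / 2)
    (hwall : (s - C) ^ 2 + t ^ 2 = D + C ^ 2) :
    -z + g * s * y₁ - d * u * y₂ - x / 2 * (g * (s ^ 2 - t ^ 2) - d * u ^ 2)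
      = (s - C) * g * (y₁ - x * s) := by
  linear_combination hlin + x * g / 2 * hwall

end Wall

theorem wall_relations_general
    (B : V →ₗ[ℝ] V →ₗ[ℝ] ℝ) (hB : ∀ v w : V, B v w = B w v)
    (H γ : V) (u g d : ℝ)
    (hg : g = B H H) (hHγ : B H γ = 0)
    (hd : d = -(B γ γ))
    (x y₁ y₂ z r c₁ c₂ χ' : ℝ) (δ : V)
    (hδH : B δ H = 0) (hδγ : B δ γ = 0)
    (hden : x * c₁ - r * y₁ ≠ 0)
    (C D : ℝ)
    (hC : C = (x * χ' - r * z + u * d * (x * c₂ - r * y₂)) / (g * (x * c₁ - r * y₁)))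
    (hD : D = (2*z*c₁ - 2*c₂*u*d*y₁ - x*u^2*d*c₁ + 2*y₂*u*d*c₁ - 2*χ'*y₁ + r*u^2*d*y₁)
              / (g * (x * c₁ - r * y₁)))
    (s t : ℝ)
    (hwall : (s - C)^2 + t^2 = D + C^2)
    (hIm : ZIm B (t • H) (s • H + u • γ) (x, y₁ • H + y₂ • γ + δ, z) ≠ 0)
    (μ : ℝ)
    (hμ : μ = -(ZRe B (t • H) (s • H + u • γ) (x, y₁ • H + y₂ • γ + δ, z))
            / ZIm B (t • H) (s • H + u • γ) (x, y₁ • H + y₂ • γ + δ, z)) :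
    μ • (t • H) + (s • H + u • γ) = C • H + u • γ ∧
    B (s • H + u • γ) (μ • (t • H) + (s • H + u • γ))
        - (1/2) * (B (t • H) (t • H) + B (s • H + u • γ) (s • H + u • γ))
      = -(g/2) * D - (d/2) * u^2 := by
  have hγH : B γ H = 0 := hB γ H ▸ hHγ
  have hγγ : B γ γ = -d := by rw [hd, neg_neg]
  rw [ZIm_frame B hg.symm hγH hδH] at hIm hμ
  have hg0 : g ≠ 0 := right_ne_zero_of_mul (left_ne_zero_of_mul hIm)
  rw [ZRe_frame B hg.symm hγγ hHγ hγH hδH hδγ,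
    ZRe_frame_eq_on_wall (wall_parameters_linear_eq hg0 hden hC hD) hwall] at hμ
  have hslope : μ * t + s = C := by
    rw [hμ, div_mul_eq_mul_div, div_add' _ _ _ hIm, div_eq_iff hIm]
    ring
  have hcenter : μ • (t • H) + (s • H + u • γ) = C • H + u • γ := by
    rw [← hslope]
    module
  refine ⟨hcenter, ?_⟩
  have htH : t • H = t • H + (0 : ℝ) • γ := by simp
  rw [hcenter, htH]
  simp only [frame_pair B hg.symm hγγ hHγ hγH]
  linear_combination -(g / 2) * hwall

/-- relations on a potential wall (Lemma 4.2). -/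
theorem wall_relations
    (B : V →ₗ[ℝ] V →ₗ[ℝ] ℝ) (hB : ∀ v w : V, B v w = B w v)
    (H γ : V) (u g d : ℝ)
    (hg : g = B H H) (hgpos : 0 < g) (hHγ : B H γ = 0)
    (hd : d = -(B γ γ)) (hdnn : 0 ≤ d) (hu : 0 ≤ u)
    (x y₁ y₂ z r c₁ c₂ χ' : ℝ) (δ δ' : V)
    (hδH : B δ H = 0) (hδγ : B δ γ = 0) (hδ'H : B δ' H = 0) (hδ'γ : B δ' γ = 0)
    (hden : x * c₁ - r * y₁ ≠ 0)
    (C D : ℝ)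
    (hC : C = (x * χ' - r * z + u * d * (x * c₂ - r * y₂)) / (g * (x * c₁ - r * y₁)))
    (hD : D = (2*z*c₁ - 2*c₂*u*d*y₁ - x*u^2*d*c₁ + 2*y₂*u*d*c₁ - 2*χ'*y₁ + r*u^2*d*y₁)
              / (g * (x * c₁ - r * y₁)))
    (s t : ℝ) (ht : 0 < t)
    (hwall : (s - C)^2 + t^2 = D + C^2)
    (hIm : ZIm B (t • H) (s • H + u • γ) (x, y₁ • H + y₂ • γ + δ, z) ≠ 0)
    (μ : ℝ)
    (hμ : μ = -(ZRe B (t • H) (s • H + u • γ) (x, y₁ • H + y₂ • γ + δ, z))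
            / ZIm B (t • H) (s • H + u • γ) (x, y₁ • H + y₂ • γ + δ, z)) :
    μ • (t • H) + (s • H + u • γ) = C • H + u • γ ∧
    B (s • H + u • γ) (μ • (t • H) + (s • H + u • γ))
        - (1/2) * (B (t • H) (t • H) + B (s • H + u • γ) (s • H + u • γ))
      = -(g/2) * D - (d/2) * u^2 :=
  wall_relations_general B hB H γ u g d hg hHγ hd x y₁ y₂ z r c₁ c₂ χ' δ hδH hδγ hden C D hC hD s t
    hwall hIm μ hμ
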